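/- arXiv:2308.15426 — 11 statements merged into one kernel-verified Lean document; each statement's English description precedes it below -/
import Mathlib

section
/- For all z, w ∈ B_Tm, the set z →̂ w = {u ∈ B_Tm : u1 = z1 ⇒ w1, u3 = z2 ⊓ w3, and z3 ⊔ w2 ≤ u2 ≤ (z2 ⇒ w2) ⊓ (w3 ⇒ z3)} is nonempty. -/
abbrev Triple := Bool × Bool × Bool

def BTm (a : Triple) : Prop := a.2.1 ≤ a.1 ∧ (a.1 && a.2.2) = false

theorem stmt_3 (z w : Triple) (hz : BTm z) (hw : BTm w) :
    ∃ u : Triple, BTm u ∧ u.1 = (!z.1 || w.1) ∧ u.2.2 = (z.2.1 && w.2.2) ∧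
      (z.2.2 || w.2.1) ≤ u.2.1 ∧ u.2.1 ≤ ((!z.2.1 || w.2.1) && (!w.2.2 || z.2.2)) := by
  refine ⟨⟨(!z.1 || w.1), (z.2.2 || w.2.1), (z.2.1 && w.2.2)⟩, ?_⟩
  obtain ⟨z1, z2, z3⟩ := z
  obtain ⟨w1, w2, w3⟩ := w
  simp [BTm] at *
  revert hz hw
  cases z1 <;> cases z2 <;> cases z3 <;> cases w1 <;> cases w2 <;> cases w3 <;> simp
end

section
/- For all z, w ∈ B_T, the set z ∧̃ w = {u ∈ B_T : u1 = z1 ⊓ w1, u2 = z2 ⊓ w2, u4 = z4 ⊔ w4, and z3 ⊔ w3 ≤ u3 ≤ (z2 ⇒ w3) ⊓ (w2 ⇒ z3)} is nonempty; hence the conjunction multioperator of the Nmatrix M_{IvFDE_T} is well-defined. -/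
abbrev Snap := Bool × Bool × Bool × Bool

def BT (z : Snap) : Prop :=
  z.2.1 ≤ z.1 ∧ (z.1 && z.2.2.1) = false ∧ (z.2.1 && z.2.2.2) = false ∧ z.2.2.1 ≤ z.2.2.2

theorem stmt_4 (z w : Snap) (hz : BT z) (hw : BT w) :
    ∃ u : Snap, BT u ∧ u.1 = (z.1 && w.1) ∧ u.2.1 = (z.2.1 && w.2.1) ∧
      u.2.2.2 = (z.2.2.2 || w.2.2.2) ∧
      (z.2.2.1 || w.2.2.1) ≤ u.2.2.1 ∧
      u.2.2.1 ≤ ((!z.2.1 || w.2.2.1) && (!w.2.1 || z.2.2.1)) := by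
  obtain ⟨z1,z2,z3,z4⟩ := z
  obtain ⟨w1,w2,w3,w4⟩ := w
  obtain ⟨a,b,c,d⟩ := hz
  obtain ⟨e,f,g,h⟩ := hw
  refine ⟨(z1 && w1, z2 && w2, z3 || w3, z4 || w4), ?_⟩
  simp only [BT] at *
  revert a b c d e f g h
  revert z1 z2 z3 z4 w1 w2 w3 w4
  decide
end

section
/- For all z, w ∈ B_T, the set z →̃ w = {u ∈ B_T : u1 = z1 ⇒ w1, u3 = z2 ⊓ w3, u4 = z1 ⊓ w4, and z3 ⊔ w2 ≤ u2 ≤ (z2 ⇒ w2) ⊓ (w3 ⇒ z3)} is nonempty. -/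
theorem stmt_5 (z w : Snap) (hz : BT z) (hw : BT w) :
    ∃ u : Snap, BT u ∧ u.1 = (!z.1 || w.1) ∧ u.2.2.1 = (z.2.1 && w.2.2.1) ∧
      u.2.2.2 = (z.1 && w.2.2.2) ∧
      (z.2.2.1 || w.2.1) ≤ u.2.1 ∧
      u.2.1 ≤ ((!z.2.1 || w.2.1) && (!w.2.2.1 || z.2.2.1)) := by
  obtain ⟨z1,z2,z3,z4⟩ := z
  obtain ⟨w1,w2,w3,w4⟩ := w
  simp only [BT] at *
  revert hz hw z1 z2 z3 z4 w1 w2 w3 w4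
  decide
end

section
/- Every instance of the T axiom is valid in M_{IvFDE_T}: for every valuation v over the Nmatrix M_{IvFDE_T} and every formula φ, the first coordinate of v(□φ → φ) equals 1. -/
/-- Formulas over the signature {∧, ∨, →, ~, ¬, □}. -/
inductive Fm where
  | var : ℕ → Fm
  | and : Fm → Fm → Fm
  | or : Fm → Fm → Fm
  | imp : Fm → Fm → Fm
  | snot : Fm → Fm   -- classical negation ~
  | pnot : Fm → Fm   -- paraconsistent negation ¬
  | box : Fm → Fm

/-- u ∈ z ∧̃ w -/
def memAnd (z w u : Snap) : Prop :=
  BT u ∧ u.1 = (z.1 && w.1) ∧ u.2.1 = (z.2.1 && w.2.1) ∧ u.2.2.2 = (z.2.2.2 || w.2.2.2) ∧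
    (z.2.2.1 || w.2.2.1) ≤ u.2.2.1 ∧ u.2.2.1 ≤ ((!z.2.1 || w.2.2.1) && (!w.2.1 || z.2.2.1))

/-- u ∈ z ∨̃ w -/
def memOr (z w u : Snap) : Prop :=
  BT u ∧ u.1 = (z.1 || w.1) ∧ u.2.2.1 = (z.2.2.1 && w.2.2.1) ∧ u.2.2.2 = (z.2.2.2 && w.2.2.2) ∧
    (z.2.1 || w.2.1) ≤ u.2.1 ∧ u.2.1 ≤ ((!z.2.2.1 || w.2.1) && (!w.2.2.1 || z.2.1))

/-- u ∈ z →̃ w -/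
def memImp (z w u : Snap) : Prop :=
  BT u ∧ u.1 = (!z.1 || w.1) ∧ u.2.2.1 = (z.2.1 && w.2.2.1) ∧ u.2.2.2 = (z.1 && w.2.2.2) ∧
    (z.2.2.1 || w.2.1) ≤ u.2.1 ∧ u.2.1 ≤ ((!z.2.1 || w.2.1) && (!w.2.2.1 || z.2.2.1))

/-- u ∈ ~̃ z -/
def memSnot (z u : Snap) : Prop :=
  BT u ∧ u.1 = !z.1 ∧ u.2.1 = z.2.2.1 ∧ u.2.2.1 = z.2.1 ∧ z.2.1 ≤ u.2.2.2 ∧ u.2.2.2 ≤ !z.2.2.1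

/-- u ∈ ¬̃ z (singleton) -/
def memPnot (z u : Snap) : Prop :=
  u = (z.2.2.2, z.2.2.1, z.2.1, z.1)

/-- u ∈ □̃ z -/
def memBox (z u : Snap) : Prop :=
  BT u ∧ u.1 = z.2.1

/-- A valuation over the 6-valued Nmatrix M_{IvFDE_T}. -/
structure Val where
  v : Fm → Snap
  var_ok : ∀ n, BT (v (.var n))
  and_ok : ∀ φ ψ, memAnd (v φ) (v ψ) (v (.and φ ψ))
  or_ok : ∀ φ ψ, memOr (v φ) (v ψ) (v (.or φ ψ))
  imp_ok : ∀ φ ψ, memImp (v φ) (v ψ) (v (.imp φ ψ))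
  snot_ok : ∀ φ, memSnot (v φ) (v (.snot φ))
  pnot_ok : ∀ φ, memPnot (v φ) (v (.pnot φ))
  box_ok : ∀ φ, memBox (v φ) (v (.box φ))

lemma bt_all (V : Val) (φ : Fm) : BT (V.v φ) := by
  induction φ with
  | var n => exact V.var_ok n
  | and a b _ _ => exact (V.and_ok a b).1
  | or a b _ _ => exact (V.or_ok a b).1
  | imp a b _ _ => exact (V.imp_ok a b).1
  | snot a _ => exact (V.snot_ok a).1
  | pnot a ih =>
      have h := V.pnot_ok a
      rw [memPnot] at h
      rcases hz : V.v a with ⟨z1,z2,z3,z4⟩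
      rw [hz] at ih h
      rw [h]
      simp only [BT] at ih ⊢
      rcases z1 <;> rcases z2 <;> rcases z3 <;> rcases z4 <;> simp_all
  | box a _ => exact (V.box_ok a).1

theorem stmt_8 (V : Val) (φ : Fm) : (V.v (.imp (.box φ) φ)).1 = true := by
  have hi := (V.imp_ok (.box φ) φ).2.1
  have hb := (V.box_ok φ).2
  have hφ := (bt_all V φ).1
  rw [hi, hb]
  revert hφ
  rcases V.v φ with ⟨a1,a2,a3,a4⟩
  rcases a1 <;> rcases a2 <;> simp
end

section
/- Every instance of the K axiom □(φ→ψ) → (□φ → □ψ) is valid in M_{IvFDE_T}: for every valuation v, the first coordinate of v(□(φ→ψ) → (□φ → □ψ)) equals 1. -/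
theorem stmt_9 (V : Val) (φ ψ : Fm) :
    (V.v (.imp (.box (.imp φ ψ)) (.imp (.box φ) (.box ψ)))).1 = true := by
  have h1 := V.imp_ok (.box (.imp φ ψ)) (.imp (.box φ) (.box ψ))
  have h2 := V.box_ok (.imp φ ψ)
  have h3 := V.imp_ok (.box φ) (.box ψ)
  have h4 := V.box_ok φ
  have h5 := V.box_ok ψ
  have h6 := V.imp_ok φ ψ
  obtain ⟨_, e1, _, _, lo1, hi1⟩ := h1
  obtain ⟨_, e2⟩ := h2
  obtain ⟨_, e3, _, _, lo3, hi3⟩ := h3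
  obtain ⟨_, e4⟩ := h4
  obtain ⟨_, e5⟩ := h5
  obtain ⟨_, _, _, _, lo6, hi6⟩ := h6
  rw [e1, e3, e4, e5, e2]
  revert lo6 hi6
  cases (V.v φ).2.1 <;> cases (V.v ψ).2.1 <;> cases (V.v (.imp φ ψ)).2.1 <;> simp
end

section
/- For every valuation v over M_{IvFDE_T}, the first coordinate of v(□~¬¬φ) equals the first coordinate of v(□~φ). -/
theorem stmt_10 (V : Val) (φ : Fm) :
    (V.v (.box (.snot (.pnot (.pnot φ))))).1 = (V.v (.box (.snot φ))).1 := by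
  have b1 := (V.box_ok (.snot (.pnot (.pnot φ)))).2
  have b2 := (V.box_ok (.snot φ)).2
  have s1 := (V.snot_ok (.pnot (.pnot φ))).2.2.1
  have s2 := (V.snot_ok φ).2.2.1
  have p1 := V.pnot_ok φ
  have p2 := V.pnot_ok (.pnot φ)
  simp [memPnot] at p1 p2
  rw [b1, b2, s1, s2, p2, p1]
end

section
/- In M_{IvFDE_T}, the connective □ is hyperintensional: there exists a valuation v over the 6-valued Nmatrix M_{IvFDE_T} and propositional variables p, q such that v(p → q) and v(~p ∨ q) agree in first coordinate (so they are both designated or both non-designated), while v(□(p → q)) is designated and v(□(~p ∨ q)) is not designated. -/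
def fAnd (z w : Snap) : Snap :=
  (z.1 && w.1, z.2.1 && w.2.1, z.2.2.1 || w.2.2.1, z.2.2.2 || w.2.2.2)

def fOr (z w : Snap) : Snap :=
  (z.1 || w.1, z.2.1 || w.2.1, z.2.2.1 && w.2.2.1, z.2.2.2 && w.2.2.2)

def fImp (z w : Snap) : Snap :=
  (!z.1 || w.1,
   (!z.2.1 || w.2.1) && (!w.2.2.1 || z.2.2.1) && (!z.1 || w.1) && !(z.1 && w.2.2.2),
   z.2.1 && w.2.2.1, z.1 && w.2.2.2)

def fSnot (z : Snap) : Snap := (!z.1, z.2.2.1, z.2.1, z.2.1)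

def fPnot (z : Snap) : Snap := (z.2.2.2, z.2.2.1, z.2.1, z.1)

def fBox (z : Snap) : Snap := (z.2.1, false, false, false)

def ev : Fm → Snap
  | .var _ => (true, false, false, false)
  | .and a b => fAnd (ev a) (ev b)
  | .or a b => fOr (ev a) (ev b)
  | .imp a b => fImp (ev a) (ev b)
  | .snot a => fSnot (ev a)
  | .pnot a => fPnot (ev a)
  | .box a => fBox (ev a)

lemma fAnd_ok : ∀ z w : Snap, BT z → BT w → memAnd z w (fAnd z w) := by
  unfold memAnd BT fAnd; decide
lemma fOr_ok : ∀ z w : Snap, BT z → BT w → memOr z w (fOr z w) := by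
  unfold memOr BT fOr; decide
lemma fImp_ok : ∀ z w : Snap, BT z → BT w → memImp z w (fImp z w) := by
  unfold memImp BT fImp; decide
lemma fSnot_ok : ∀ z : Snap, BT z → memSnot z (fSnot z) := by
  unfold memSnot BT fSnot; decide
lemma fPnot_ok : ∀ z : Snap, memPnot z (fPnot z) := by
  unfold memPnot fPnot; decide
lemma fBox_ok : ∀ z : Snap, BT z → memBox z (fBox z) := by
  unfold memBox BT fBox; decide
lemma fPnot_bt : ∀ z : Snap, BT z → BT (fPnot z) := by
  unfold BT fPnot; decide

lemma ev_bt : ∀ φ, BT (ev φ) := by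
  intro φ
  induction φ with
  | var n => exact (by unfold BT; decide : BT ((true:Bool),false,false,false))
  | and a b ha hb => exact (fAnd_ok _ _ ha hb).1
  | or a b ha hb => exact (fOr_ok _ _ ha hb).1
  | imp a b ha hb => exact (fImp_ok _ _ ha hb).1
  | snot a ha => exact (fSnot_ok _ ha).1
  | pnot a ha => exact fPnot_bt _ ha
  | box a ha => exact (fBox_ok _ ha).1

def V0 : Val where
  v := ev
  var_ok := fun _ => ev_bt _
  and_ok := fun φ ψ => fAnd_ok _ _ (ev_bt φ) (ev_bt ψ)
  or_ok := fun φ ψ => fOr_ok _ _ (ev_bt φ) (ev_bt ψ)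
  imp_ok := fun φ ψ => fImp_ok _ _ (ev_bt φ) (ev_bt ψ)
  snot_ok := fun φ => fSnot_ok _ (ev_bt φ)
  pnot_ok := fun φ => fPnot_ok _
  box_ok := fun φ => fBox_ok _ (ev_bt φ)

theorem stmt_11 :
    ∃ (V : Val) (p q : ℕ), p ≠ q ∧
      (V.v (.imp (.var p) (.var q))).1 = (V.v (.or (.snot (.var p)) (.var q))).1 ∧
      (V.v (.box (.imp (.var p) (.var q)))).1 = true ∧
      (V.v (.box (.or (.snot (.var p)) (.var q)))).1 = false := by
  exact ⟨V0, 0, 1, by decide, rfl, rfl, rfl⟩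
end

section
/- The classicality operator ∘φ := (φ ∨ ¬φ) ∧ ~(φ ∧ ¬φ) in M_{IvFDE_T} satisfies: for every valuation v and formula φ, v(∘φ) is designated if and only if v(φ) ∉ {t1, f0}. -/
/-- The classicality operator ∘φ := (φ ∨ ¬φ) ∧ ~(φ ∧ ¬φ). -/
def circ (φ : Fm) : Fm := .and (.or φ (.pnot φ)) (.snot (.and φ (.pnot φ)))

lemma bt_val (V : Val) : ∀ φ, BT (V.v φ) := by
  intro φ
  induction φ with
  | var n => exact V.var_ok n
  | and a b _ _ => exact (V.and_ok a b).1
  | or a b _ _ => exact (V.or_ok a b).1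
  | imp a b _ _ => exact (V.imp_ok a b).1
  | snot a _ => exact (V.snot_ok a).1
  | pnot a ih =>
      have h := V.pnot_ok a
      rw [memPnot] at h
      rw [h]
      obtain ⟨h1, h2, h3, h4⟩ := ih
      exact ⟨h4, by simpa [Bool.and_comm] using h3, by simpa [Bool.and_comm] using h2, h1⟩
  | box a _ => exact (V.box_ok a).1

theorem stmt_14 (V : Val) (φ : Fm) :
    (V.v (circ φ)).1 = true ↔
      V.v φ ≠ (true, false, false, true) ∧ V.v φ ≠ (false, false, false, false) := by
  have hc := V.and_ok (.or φ (.pnot φ)) (.snot (.and φ (.pnot φ)))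
  have ho := V.or_ok φ (.pnot φ)
  have ha := V.and_ok φ (.pnot φ)
  have hs := V.snot_ok (.and φ (.pnot φ))
  have hp := V.pnot_ok φ
  rw [memPnot] at hp
  have hBT := bt_val V φ
  have h1 : (V.v (circ φ)).1
      = ((V.v (.or φ (.pnot φ))).1 && (V.v (.snot (.and φ (.pnot φ)))).1) := hc.2.1
  have h2 : (V.v (.or φ (.pnot φ))).1 = ((V.v φ).1 || (V.v (.pnot φ)).1) := ho.2.1
  have h3 : (V.v (.snot (.and φ (.pnot φ)))).1 = !(V.v (.and φ (.pnot φ))).1 := hs.2.1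
  have h4 : (V.v (.and φ (.pnot φ))).1 = ((V.v φ).1 && (V.v (.pnot φ)).1) := ha.2.1
  rw [h1, h2, h3, h4, hp]
  revert hBT
  generalize V.v φ = z
  obtain ⟨a, b, c, d⟩ := z
  intro hBT
  obtain ⟨g1, g2, g3, g4⟩ := hBT
  simp only [Prod.mk.injEq, ne_eq, not_and_or]
  revert g1 g2 g3 g4
  revert a b c d
  decide
end

section
/- The image under h of the IDM4 matrix is a subNmatrix of the reduct of M_{IvFDE_T} to the signature {∧,∨,→,¬}: for every binary connective # ∈ {∧,∨,→} and all z, w ∈ A4, h(z #_{IDM4} w) ∈ h(z) #̃ h(w), and h(¬_{IDM4} z) ∈ ¬̃ h(z). -/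
abbrev V4 := Bool × Bool
-- IDM4 operations on pairs
def and4 (z w : V4) : V4 := (z.1 && w.1, z.2 || w.2)
def or4 (z w : V4) : V4 := (z.1 || w.1, z.2 && w.2)
def imp4 (z w : V4) : V4 := ((!z.1 || w.1), z.1 && w.2)
def neg4 (z : V4) : V4 := (z.2, z.1)

def h (z : V4) : Snap := (z.1, false, false, z.2)

theorem stmt_16 (z w : V4) :
    memAnd (h z) (h w) (h (and4 z w)) ∧
    memOr (h z) (h w) (h (or4 z w)) ∧
    memImp (h z) (h w) (h (imp4 z w)) ∧
    memPnot (h z) (h (neg4 z)) := by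
  obtain ⟨a,b⟩ := z; obtain ⟨c,d⟩ := w
  cases a <;> cases b <;> cases c <;> cases d <;> simp [memAnd, memOr, memImp, memPnot, BT, h, and4, or4, imp4, neg4]
end

section
/- The map g : A_m → B_T given by g(z1,z2,z3) = (z1,z2,z3,¬z1) is injective with image {T0, t0, f1, F1}, and g embeds the 4-valued Nmatrix of Tm into M_{IvFDE_T} for the modal operator: for every z ∈ A_m, g(□̂ z) ⊆ □̃ g(z), where □̂ z = {u ∈ A_m : u1 = z2} and □̃ w = {u ∈ B_T : u1 = w2}. -/
def g (a : Triple) : Snap := (a.1, a.2.1, a.2.2, !a.1)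

theorem stmt_17 :
    Set.InjOn g {a | BTm a} ∧
    g '' {a | BTm a} =
      ({(true,true,false,false), (true,false,false,false),
        (false,false,false,true), (false,false,true,true)} : Set Snap) ∧
    ∀ z : Triple, BTm z → ∀ u : Triple, BTm u → u.1 = z.2.1 →
      BT (g u) ∧ (g u).1 = (g z).2.1 := by
  refine ⟨?_, ?_, ?_⟩
  · rintro ⟨a1,a2,a3⟩ _ ⟨b1,b2,b3⟩ _ h
    simp [g, Prod.ext_iff] at h
    simp [Prod.ext_iff, h.1, h.2.1, h.2.2.1]
  · ext z
    simp only [Set.mem_image, Set.mem_setOf_eq, Set.mem_insert_iff, Set.mem_singleton_iff]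
    constructor
    · rintro ⟨⟨a1,a2,a3⟩, ⟨h1,h2⟩, heq⟩
      subst heq
      revert h1 h2
      cases a1 <;> cases a2 <;> cases a3 <;> decide
    · rintro (h|h|h|h) <;> rw [h]
      · exact ⟨(true,true,false), ⟨by decide, by decide⟩, rfl⟩
      · exact ⟨(true,false,false), ⟨by decide, by decide⟩, rfl⟩
      · exact ⟨(false,false,false), ⟨by decide, by decide⟩, rfl⟩
      · exact ⟨(false,false,true), ⟨by decide, by decide⟩, rfl⟩
  · rintro ⟨z1,z2,z3⟩ hz ⟨u1,u2,u3⟩ hu h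
    obtain ⟨hu1,hu2⟩ := hu
    obtain ⟨hz1,hz2⟩ := hz
    simp [g, BT, h]
    revert hu1 hu2 hz1 hz2 h
    cases z1 <;> cases z2 <;> cases u1 <;> cases u2 <;> cases u3 <;> simp
end

section
/- For every a ∈ B_T, every valuation v over M_{IvFDE_T}, and every formula φ: v(θ_a(φ)) is designated iff v(φ) = a, where θ_a(φ) is the characteristic formula a1·φ ∧ a2·□φ ∧ a3·□~φ ∧ a4·¬φ (with 1·ψ = ψ and 0·ψ = ~ψ). -/
/-- 1·ψ = ψ and 0·ψ = ~ψ. -/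
def lit (b : Bool) (ψ : Fm) : Fm := if b then ψ else .snot ψ

/-- The characteristic formula θ_a(φ) = a1·φ ∧ a2·□φ ∧ a3·□~φ ∧ a4·¬φ. -/
def theta (a : Snap) (φ : Fm) : Fm :=
  .and (.and (.and (lit a.1 φ) (lit a.2.1 (.box φ))) (lit a.2.2.1 (.box (.snot φ))))
    (lit a.2.2.2 (.pnot φ))

lemma lit_des (V : Val) (b : Bool) (ψ : Fm) :
    ((V.v (lit b ψ)).1 = true) ↔ (V.v ψ).1 = b := by
  cases b with
  | true => simp [lit]
  | false =>
    have h := V.snot_ok ψ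
    simp [lit, h.2.1]

theorem stmt_18 (a : Snap) (ha : BT a) (V : Val) (φ : Fm) :
    (V.v (theta a φ)).1 = true ↔ V.v φ = a := by
  obtain ⟨a1, a2, a3, a4⟩ := a
  have hb := (V.box_ok φ).2
  have hbs := (V.box_ok (.snot φ)).2
  have hs := (V.snot_ok φ).2.2.1
  have hp := V.pnot_ok φ
  have h1 := (V.and_ok (.and (.and (lit a1 φ) (lit a2 (.box φ))) (lit a3 (.box (.snot φ)))) (lit a4 (.pnot φ))).2.1
  have h2 := (V.and_ok (.and (lit a1 φ) (lit a2 (.box φ))) (lit a3 (.box (.snot φ)))).2.1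
  have h3 := (V.and_ok (lit a1 φ) (lit a2 (.box φ))).2.1
  constructor
  · intro h
    simp only [theta, h1, h2, h3, Bool.and_eq_true] at h
    obtain ⟨⟨⟨p1, p2⟩, p3⟩, p4⟩ := h
    rw [lit_des] at p1 p2 p3 p4
    rw [hb] at p2
    rw [hbs, hs] at p3
    rw [hp] at p4
    have : V.v φ = ((V.v φ).1, (V.v φ).2.1, (V.v φ).2.2.1, (V.v φ).2.2.2) := rfl
    simp only at p4
    rw [this, p1, p2, p3, p4]
  · intro h
    simp only [theta, h1, h2, h3, Bool.and_eq_true]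
    refine ⟨⟨⟨?_, ?_⟩, ?_⟩, ?_⟩ <;> rw [lit_des]
    · rw [h]
    · rw [hb, h]
    · rw [hbs, hs, h]
    · rw [hp, h]
end
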